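/- arXiv:2512.19838 — 2 statements merged into one kernel-verified Lean document; each statement's English description precedes it below -/
import Mathlib

section
/- Let η,φ>0, c≥0 with c² < 2ηφ, let Q and I be the integration and exponentially-weighted Volterra operators on L²([0,T]) (with resilience β>0 and impact coefficient c), and define the quadratic form 𝒬(ν) = 2η‖ν‖² − 2c⟨Qν,ν⟩ + φ‖Qν‖² + 2β⟨Qν,Iν⟩. Then 𝒬(ν) ≥ ‖√(2η)ν − √φ Qν‖² for every ν∈L²([0,T]). -/
open MeasureTheory intervalIntegral

lemma triangle_swap {T : ℝ} (f g : ℝ → ℝ)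
    (hf : IntegrableOn f (Set.Ioc 0 T))
    (hg : IntegrableOn g (Set.Ioc 0 T)) :
    (∫ t in Set.Ioc (0:ℝ) T, g t * ∫ s in Set.Ioc (0:ℝ) t, f s)
      = ∫ s in Set.Ioc (0:ℝ) T, f s * ∫ t in Set.Ioc s T, g t := by
  set μ := volume.restrict (Set.Ioc (0:ℝ) T) with hμ
  have hmeas : MeasurableSet {p : ℝ × ℝ | p.2 ≤ p.1} :=
    measurableSet_le measurable_snd measurable_fst
  have hint : Integrable ((fun p : ℝ × ℝ => if p.2 ≤ p.1 then g p.1 * f p.2 else 0))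
      (μ.prod μ) := by
    have : Integrable (fun p : ℝ × ℝ => g p.1 * f p.2) (μ.prod μ) := hg.mul_prod hf
    have := this.indicator hmeas
    refine this.congr ?_
    filter_upwards with p
    by_cases h : p.2 ≤ p.1 <;> simp [Set.indicator_apply, h]
  have swap := integral_integral_swap (f := fun t s => if s ≤ t then g t * f s else 0)
    (μ := μ) (ν := μ) hint
  calc (∫ t in Set.Ioc (0:ℝ) T, g t * ∫ s in Set.Ioc (0:ℝ) t, f s)
      = ∫ t, (∫ s, (if s ≤ t then g t * f s else 0) ∂μ) ∂μ := by
        rw [hμ]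
        refine setIntegral_congr_fun measurableSet_Ioc (fun t ht => ?_)
        have : (fun s => if s ≤ t then g t * f s else 0)
            = (Set.Iic t).indicator (fun s => g t * f s) := by
          ext s; simp [Set.indicator_apply]
        rw [this, setIntegral_indicator measurableSet_Iic, Set.Ioc_inter_Iic,
          min_eq_right ht.2, MeasureTheory.integral_const_mul]
    _ = ∫ s, (∫ t, (if s ≤ t then g t * f s else 0) ∂μ) ∂μ := swap
    _ = ∫ s in Set.Ioc (0:ℝ) T, f s * ∫ t in Set.Ioc s T, g t := by
        rw [hμ]
        refine setIntegral_congr_fun measurableSet_Ioc (fun s hs => ?_)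
        have : (fun t => if s ≤ t then g t * f s else 0)
            = (Set.Ici s).indicator (fun t => g t * f s) := by
          ext t; simp [Set.indicator_apply]
        have h2 : Set.Ioc (0:ℝ) T ∩ Set.Ici s = Set.Icc s T := by
          ext x
          simp only [Set.mem_inter_iff, Set.mem_Ioc, Set.mem_Ici, Set.mem_Icc]
          constructor
          · rintro ⟨⟨_, h2⟩, h3⟩; exact ⟨h3, h2⟩
          · rintro ⟨h1, h2⟩; exact ⟨⟨lt_of_lt_of_le hs.1 h1, h2⟩, h1⟩
        rw [this, setIntegral_indicator measurableSet_Ici, h2,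
          integral_Icc_eq_integral_Ioc, MeasureTheory.integral_mul_const]
        exact mul_comm _ _


lemma self_pair {T : ℝ} (hT : 0 ≤ T) (f : ℝ → ℝ)
    (hf : IntegrableOn f (Set.Icc 0 T)) :
    (∫ t in Set.Ioc (0:ℝ) T, f t * ∫ s in Set.Ioc (0:ℝ) t, f s)
      = (∫ s in Set.Ioc (0:ℝ) T, f s) ^ 2 / 2 := by
  have hfIoc : IntegrableOn f (Set.Ioc 0 T) := hf.mono_set Set.Ioc_subset_Icc_self
  set A := ∫ s in Set.Ioc (0:ℝ) T, f s with hA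
  set X := ∫ t in Set.Ioc (0:ℝ) T, f t * ∫ s in Set.Ioc (0:ℝ) t, f s with hX
  -- continuity and boundedness of the primitive Q
  have hQcont : ContinuousOn (fun x => ∫ s in Set.Ioc (0:ℝ) x, f s) (Set.Icc 0 T) :=
    intervalIntegral.continuousOn_primitive hf
  obtain ⟨M, hM⟩ := (isCompact_Icc.image_of_continuousOn hQcont).isBounded.exists_norm_le
  have hQmeas : AEStronglyMeasurable (fun x => ∫ s in Set.Ioc (0:ℝ) x, f s)
      (volume.restrict (Set.Ioc (0:ℝ) T)) :=
    (hQcont.mono Set.Ioc_subset_Icc_self).aestronglyMeasurable measurableSet_Ioc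
  have hQbdd : ∀ᵐ x ∂(volume.restrict (Set.Ioc (0:ℝ) T)),
      ‖∫ s in Set.Ioc (0:ℝ) x, f s‖ ≤ M := by
    rw [ae_restrict_iff' measurableSet_Ioc]
    filter_upwards with x hx
    exact hM _ ⟨x, Set.Ioc_subset_Icc_self hx, rfl⟩
  have hQf : Integrable (fun s => (∫ u in Set.Ioc (0:ℝ) s, f u) * f s)
      (volume.restrict (Set.Ioc (0:ℝ) T)) :=
    hfIoc.bdd_mul hQmeas hQbdd
  -- split integral over Ioc s T
  have key : ∀ s ∈ Set.Ioc (0:ℝ) T,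
      (∫ t in Set.Ioc s T, f t) = A - ∫ u in Set.Ioc (0:ℝ) s, f u := by
    intro s hs
    have h1 : IntegrableOn f (Set.Ioc 0 s) := hfIoc.mono_set (Set.Ioc_subset_Ioc_right hs.2)
    have h2 : IntegrableOn f (Set.Ioc s T) := hfIoc.mono_set (Set.Ioc_subset_Ioc_left hs.1.le)
    have := setIntegral_union (Set.Ioc_disjoint_Ioc_of_le (a := (0:ℝ)) (b := s) (c := s) (d := T) le_rfl)
      measurableSet_Ioc h1 h2
    rw [Set.Ioc_union_Ioc_eq_Ioc hs.1.le hs.2] at this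
    rw [hA, this]; ring
  have step : X = A * A - X := by
    calc X = ∫ s in Set.Ioc (0:ℝ) T, (f s * A - (∫ u in Set.Ioc (0:ℝ) s, f u) * f s) := by
          rw [hX, triangle_swap f f hfIoc hfIoc]
          refine setIntegral_congr_fun measurableSet_Ioc (fun s hs => ?_)
          rw [key s hs]; ring
      _ = (∫ s in Set.Ioc (0:ℝ) T, f s * A) - ∫ s in Set.Ioc (0:ℝ) T,
            (∫ u in Set.Ioc (0:ℝ) s, f u) * f s := integral_sub (hfIoc.mul_const A) hQf
      _ = A * A - X := by
          rw [MeasureTheory.integral_mul_const, hX]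
          congr 1
          refine setIntegral_congr_fun measurableSet_Ioc (fun s _ => ?_)
          ring
  linarith [step]

lemma exp_mul_int {T a : ℝ} (ν : ℝ → ℝ) (hν : IntegrableOn ν (Set.Icc 0 T))
    {t : ℝ} (ht : t ≤ T) : IntegrableOn (fun s => Real.exp (a * s) * ν s) (Set.Ioc 0 t) := by
  have hsub : Set.Ioc (0:ℝ) t ⊆ Set.Icc 0 T := fun x hx => ⟨hx.1.le, hx.2.trans ht⟩
  have hνt : IntegrableOn ν (Set.Ioc 0 t) := hν.mono_set hsub
  refine hνt.bdd_mul (c := Real.exp (|a| * T))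
    ((Real.continuous_exp.comp (continuous_const.mul continuous_id)).aestronglyMeasurable.restrict) ?_
  rw [ae_restrict_iff' measurableSet_Ioc]
  filter_upwards with x hx
  have h1 : a * x ≤ |a| * T := by
    calc a * x ≤ |a| * x := mul_le_mul_of_nonneg_right (le_abs_self a) hx.1.le
    _ ≤ |a| * T := mul_le_mul_of_nonneg_left (hx.2.trans ht) (abs_nonneg a)
  simpa [Real.abs_exp] using Real.exp_le_exp.2 h1

lemma exp_shift_int {T β a : ℝ} (ν : ℝ → ℝ) (hν : IntegrableOn ν (Set.Icc 0 T))
    {t : ℝ} (ht : t ≤ T) :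
    IntegrableOn (fun s => Real.exp (β * (s - a)) * ν s) (Set.Ioc 0 t) := by
  have : (fun s => Real.exp (β * (s - a)) * ν s)
      = fun s => Real.exp (-(β * a)) * (Real.exp (β * s) * ν s) := by
    ext s; rw [← mul_assoc, ← Real.exp_add]; ring_nf
  rw [this]
  exact (exp_mul_int (a := β) ν hν ht).const_mul _

lemma decomp {T β : ℝ} (hβ : 0 < β) (ν : ℝ → ℝ)
    (hν : IntegrableOn ν (Set.Icc 0 T)) {t : ℝ} (ht : t ∈ Set.Icc (0:ℝ) T) :
    (∫ s in Set.Ioc (0:ℝ) t, ν s)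
      = (∫ s in Set.Ioc (0:ℝ) t, Real.exp (β * (s - t)) * ν s)
        + β * ∫ u in Set.Ioc (0:ℝ) t, ∫ s in Set.Ioc (0:ℝ) u, Real.exp (β * (s - u)) * ν s := by
  set f : ℝ → ℝ := fun s => Real.exp (β * s) * ν s with hfdef
  set g : ℝ → ℝ := fun u => β * Real.exp (-(β * u)) with hgdef
  have hsub : Set.Ioc (0:ℝ) t ⊆ Set.Icc 0 T := fun x hx => ⟨hx.1.le, hx.2.trans ht.2⟩
  have hνt : IntegrableOn ν (Set.Ioc 0 t) := hν.mono_set hsub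
  have hfint : IntegrableOn f (Set.Ioc 0 t) := exp_mul_int ν hν ht.2
  have hgcont : Continuous g :=
    continuous_const.mul (Real.continuous_exp.comp (continuous_const.mul continuous_id).neg)
  have hgint : IntegrableOn g (Set.Ioc 0 t) := hgcont.integrableOn_Ioc
  have e1 : ∀ u, (∫ s in Set.Ioc (0:ℝ) u, Real.exp (β * (s - u)) * ν s)
      = Real.exp (-(β * u)) * ∫ s in Set.Ioc (0:ℝ) u, f s := by
    intro u
    rw [← MeasureTheory.integral_const_mul]
    refine setIntegral_congr_fun measurableSet_Ioc (fun s _ => ?_)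
    simp only [hfdef, ← mul_assoc, ← Real.exp_add]
    ring_nf
  have lhs1 : (β * ∫ u in Set.Ioc (0:ℝ) t, ∫ s in Set.Ioc (0:ℝ) u, Real.exp (β * (s - u)) * ν s)
      = ∫ u in Set.Ioc (0:ℝ) t, g u * ∫ s in Set.Ioc (0:ℝ) u, f s := by
    rw [← MeasureTheory.integral_const_mul]
    refine setIntegral_congr_fun measurableSet_Ioc (fun u _ => ?_)
    rw [e1 u, hgdef]; ring
  have inner : ∀ s ∈ Set.Ioc (0:ℝ) t, (∫ u in Set.Ioc s t, g u)
      = Real.exp (-(β * s)) - Real.exp (-(β * t)) := by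
    intro s hs
    have hF : ∀ u ∈ Set.uIcc s t, HasDerivAt (fun u => -Real.exp (-(β * u)))
        (β * Real.exp (-(β * u))) u := by
      intro u _
      have h1 : HasDerivAt (fun u : ℝ => -(β * u)) (-β) u := by
        have h0 := ((hasDerivAt_id u).const_mul β).neg; rw [mul_one] at h0; exact h0
      have h2 : HasDerivAt (fun u => -Real.exp (-(β * u))) (-(Real.exp (-(β * u)) * -β)) u :=
        by have h := ((Real.hasDerivAt_exp (-(β * u))).comp u h1).neg; exact h
      convert h2 using 1
      ring
    have hgc : IntervalIntegrable g volume s t := hgcont.intervalIntegrable _ _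
    have h3 := intervalIntegral.integral_eq_sub_of_hasDerivAt (fun u hu => hF u hu) hgc
    rw [intervalIntegral.integral_of_le hs.2] at h3
    simp only [hgdef]
    rw [h3]; ring
  -- integrability of f * (exp(-βs) - exp(-βt)) on Ioc 0 t
  have hE : Integrable (fun s => f s * (Real.exp (-(β * s)) - Real.exp (-(β * t))))
      (volume.restrict (Set.Ioc (0:ℝ) t)) := by
    have hEc : Continuous fun s : ℝ => Real.exp (-(β * s)) - Real.exp (-(β * t)) :=
      (Real.continuous_exp.comp (continuous_const.mul continuous_id).neg).sub continuous_const
    have h1 : Integrable (fun s => (Real.exp (-(β * s)) - Real.exp (-(β * t))) * f s)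
        (volume.restrict (Set.Ioc (0:ℝ) t)) := by
      refine hfint.bdd_mul (c := 2) hEc.aestronglyMeasurable.restrict ?_
      rw [ae_restrict_iff' measurableSet_Ioc]
      filter_upwards with x hx
      have e1 : Real.exp (-(β * x)) ≤ 1 := Real.exp_le_one_iff.2 (by nlinarith [hx.1])
      have e2 : Real.exp (-(β * t)) ≤ 1 := Real.exp_le_one_iff.2
        (by nlinarith [hx.1.trans_le hx.2])
      have p1 := Real.exp_pos (-(β * x))
      have p2 := Real.exp_pos (-(β * t))
      rw [Real.norm_eq_abs, abs_sub_le_iff]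
      constructor <;> nlinarith
    exact h1.congr (ae_of_all _ fun s => mul_comm _ _)
  calc (∫ s in Set.Ioc (0:ℝ) t, ν s)
      = ∫ s in Set.Ioc (0:ℝ) t, (Real.exp (β * (s - t)) * ν s
          + f s * (Real.exp (-(β * s)) - Real.exp (-(β * t)))) := by
        refine setIntegral_congr_fun measurableSet_Ioc (fun s _ => ?_)
        simp only [hfdef]
        have h1 : Real.exp (β * s) * Real.exp (-(β * s)) = 1 := by
          rw [← Real.exp_add]; simp
        have h2 : Real.exp (β * s) * Real.exp (-(β * t)) = Real.exp (β * (s - t)) := by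
          rw [← Real.exp_add]; congr 1; ring
        linear_combination (ν s) * h2 - (ν s) * h1
    _ = (∫ s in Set.Ioc (0:ℝ) t, Real.exp (β * (s - t)) * ν s)
        + ∫ s in Set.Ioc (0:ℝ) t, f s * (Real.exp (-(β * s)) - Real.exp (-(β * t))) :=
        integral_add (exp_shift_int ν hν ht.2) hE
    _ = (∫ s in Set.Ioc (0:ℝ) t, Real.exp (β * (s - t)) * ν s)
        + β * ∫ u in Set.Ioc (0:ℝ) t, ∫ s in Set.Ioc (0:ℝ) u, Real.exp (β * (s - u)) * ν s := by
        congr 1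
        rw [lhs1, triangle_swap f g hfint hgint]
        refine setIntegral_congr_fun measurableSet_Ioc (fun s hs => ?_)
        rw [inner s hs]

set_option maxHeartbeats 1000000 in
/-- For the quadratic form
`𝒬(ν) = 2η‖ν‖² − 2c⟨Qν,ν⟩ + φ‖Qν‖² + 2β⟨Qν,Iν⟩` on `L²([0,T])`, with
`c² < 2ηφ`, one has `𝒬(ν) ≥ ‖√(2η)ν − √φ Qν‖²`. -/
theorem stmt_8 (T η φ β c : ℝ) (hT : 0 < T) (hη : 0 < η) (hφ : 0 < φ)
    (hβ : 0 < β) (hc0 : 0 ≤ c) (hc : c ^ 2 < 2 * η * φ)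
    (ν : ℝ → ℝ)
    (hν1 : IntegrableOn ν (Set.Icc 0 T))
    (hν2 : IntegrableOn (fun t => (ν t) ^ 2) (Set.Icc 0 T)) :
    (∫ t in (0 : ℝ)..T,
        (Real.sqrt (2 * η) * ν t - Real.sqrt φ * ∫ s in (0 : ℝ)..t, ν s) ^ 2)
      ≤ 2 * η * (∫ t in (0 : ℝ)..T, (ν t) ^ 2)
        - 2 * c * (∫ t in (0 : ℝ)..T, (∫ s in (0 : ℝ)..t, ν s) * ν t)
        + φ * (∫ t in (0 : ℝ)..T, (∫ s in (0 : ℝ)..t, ν s) ^ 2)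
        + 2 * β * (∫ t in (0 : ℝ)..T,
            (∫ s in (0 : ℝ)..t, ν s)
              * (c * ∫ s in (0 : ℝ)..t, Real.exp (β * (s - t)) * ν s)) := by
  set G : ℝ → ℝ := fun t => ∫ s in Set.Ioc (0:ℝ) t, ν s with hGdef
  set J : ℝ → ℝ := fun t => ∫ s in Set.Ioc (0:ℝ) t, Real.exp (β * (s - t)) * ν s with hJdef
  have hν1' : IntegrableOn ν (Set.Ioc 0 T) := hν1.mono_set Set.Ioc_subset_Icc_self
  -- continuity of G
  have hGcont : ContinuousOn G (Set.Icc 0 T) := intervalIntegral.continuousOn_primitive hν1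
  -- J is continuous
  have hexpint : IntegrableOn (fun s => Real.exp (β * s) * ν s) (Set.Icc 0 T) := by
    rw [integrableOn_Icc_iff_integrableOn_Ioc]
    exact exp_mul_int ν hν1 le_rfl
  have hJeq : ∀ t, J t = Real.exp (-(β * t)) * ∫ s in Set.Ioc (0:ℝ) t, Real.exp (β * s) * ν s := by
    intro t
    rw [hJdef, ← MeasureTheory.integral_const_mul]
    refine setIntegral_congr_fun measurableSet_Ioc (fun s _ => ?_)
    rw [← mul_assoc, ← Real.exp_add]
    ring_nf
  have hJcont : ContinuousOn J (Set.Icc 0 T) := by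
    rw [show J = fun t => Real.exp (-(β * t)) * ∫ s in Set.Ioc (0:ℝ) t, Real.exp (β * s) * ν s
      from funext hJeq]
    exact ((Real.continuous_exp.comp (continuous_const.mul continuous_id).neg).continuousOn).mul
      (intervalIntegral.continuousOn_primitive hexpint)
  have hJint : IntegrableOn J (Set.Icc 0 T) := hJcont.integrableOn_compact isCompact_Icc
  -- key integral identities
  have hGν : (∫ t in Set.Ioc (0:ℝ) T, G t * ν t)
      = (∫ s in Set.Ioc (0:ℝ) T, ν s) ^ 2 / 2 := by
    rw [← self_pair hT.le ν hν1]
    exact setIntegral_congr_fun measurableSet_Ioc (fun t _ => mul_comm _ _)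
  have hJJ : (∫ t in Set.Ioc (0:ℝ) T, (∫ u in Set.Ioc (0:ℝ) t, J u) * J t)
      = (∫ s in Set.Ioc (0:ℝ) T, J s) ^ 2 / 2 := by
    rw [← self_pair hT.le J hJint]
    exact setIntegral_congr_fun measurableSet_Ioc (fun t _ => mul_comm _ _)
  -- integrability facts on Ioc 0 T
  have hQJcont : ContinuousOn (fun t => ∫ u in Set.Ioc (0:ℝ) t, J u) (Set.Icc 0 T) :=
    intervalIntegral.continuousOn_primitive hJint
  have hJ2int : Integrable (fun t => J t * J t) (volume.restrict (Set.Ioc (0:ℝ) T)) :=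
    ((hJcont.mul hJcont).integrableOn_compact isCompact_Icc).mono_set Set.Ioc_subset_Icc_self
  have hQJJint : Integrable (fun t => (∫ u in Set.Ioc (0:ℝ) t, J u) * J t)
      (volume.restrict (Set.Ioc (0:ℝ) T)) :=
    ((hQJcont.mul hJcont).integrableOn_compact isCompact_Icc).mono_set Set.Ioc_subset_Icc_self
  -- the G·(cJ) term
  have hGJ : (∫ t in Set.Ioc (0:ℝ) T, G t * (c * J t))
      = c * (∫ t in Set.Ioc (0:ℝ) T, J t * J t)
        + c * β * ((∫ s in Set.Ioc (0:ℝ) T, J s) ^ 2 / 2) := by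
    have step1 : (∫ t in Set.Ioc (0:ℝ) T, G t * (c * J t))
        = ∫ t in Set.Ioc (0:ℝ) T,
            (c * (J t * J t) + c * β * ((∫ u in Set.Ioc (0:ℝ) t, J u) * J t)) := by
      refine setIntegral_congr_fun measurableSet_Ioc (fun t ht => ?_)
      have hd := decomp hβ ν hν1 (Set.Ioc_subset_Icc_self ht)
      have hGt : G t = J t + β * ∫ u in Set.Ioc (0:ℝ) t, J u := by
        rw [hGdef]; exact hd
      rw [hGt]; ring
    rw [step1, integral_add (hJ2int.const_mul c) (hQJJint.const_mul (c*β)),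
      MeasureTheory.integral_const_mul, MeasureTheory.integral_const_mul, hJJ]
  -- expansion of the square
  have ha : Real.sqrt (2*η) ^ 2 = 2*η := Real.sq_sqrt (by positivity)
  have hb : Real.sqrt φ ^ 2 = φ := Real.sq_sqrt hφ.le
  have hab : Real.sqrt (2*η) * Real.sqrt φ = Real.sqrt (2*η*φ) :=
    (Real.sqrt_mul (by positivity) φ).symm
  have hν2' : IntegrableOn (fun t => (ν t)^2) (Set.Ioc 0 T) := hν2.mono_set Set.Ioc_subset_Icc_self
  have hGνint : Integrable (fun t => G t * ν t) (volume.restrict (Set.Ioc (0:ℝ) T)) := by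
    obtain ⟨M, hM⟩ := (isCompact_Icc.image_of_continuousOn hGcont).isBounded.exists_norm_le
    refine hν1'.bdd_mul (c := M)
      ((hGcont.mono Set.Ioc_subset_Icc_self).aestronglyMeasurable measurableSet_Ioc) ?_
    rw [ae_restrict_iff' measurableSet_Ioc]
    filter_upwards with x hx
    exact hM _ ⟨x, Set.Ioc_subset_Icc_self hx, rfl⟩
  have hG2int : Integrable (fun t => G t ^ 2) (volume.restrict (Set.Ioc (0:ℝ) T)) :=
    ((hGcont.pow 2).integrableOn_compact isCompact_Icc).mono_set Set.Ioc_subset_Icc_self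
  have hexpand : (∫ t in Set.Ioc (0:ℝ) T, (Real.sqrt (2*η) * ν t - Real.sqrt φ * G t) ^ 2)
      = 2*η * (∫ t in Set.Ioc (0:ℝ) T, (ν t)^2)
        - 2 * Real.sqrt (2*η*φ) * (∫ t in Set.Ioc (0:ℝ) T, G t * ν t)
        + φ * (∫ t in Set.Ioc (0:ℝ) T, G t ^ 2) := by
    have step1 : (∫ t in Set.Ioc (0:ℝ) T, (Real.sqrt (2*η) * ν t - Real.sqrt φ * G t) ^ 2)
        = ∫ t in Set.Ioc (0:ℝ) T,
            (2*η * (ν t)^2 - 2 * Real.sqrt (2*η*φ) * (G t * ν t) + φ * G t ^ 2) := by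
      refine setIntegral_congr_fun measurableSet_Ioc (fun t _ => ?_)
      linear_combination (ν t ^ 2) * ha + (G t ^ 2) * hb
        - 2 * (ν t) * (G t) * hab
    have I1 : Integrable (fun t => 2*η * (ν t)^2 - 2 * Real.sqrt (2*η*φ) * (G t * ν t))
        (volume.restrict (Set.Ioc (0:ℝ) T)) := by
      exact (hν2'.const_mul (2*η)).sub (hGνint.const_mul (2 * Real.sqrt (2*η*φ)))
    rw [step1, integral_add I1 (hG2int.const_mul φ),
      integral_sub (hν2'.const_mul (2*η)) (hGνint.const_mul (2 * Real.sqrt (2*η*φ))),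
      MeasureTheory.integral_const_mul, MeasureTheory.integral_const_mul, MeasureTheory.integral_const_mul]
  -- convert the statement's interval integrals to Ioc set integrals
  have c1 : (∫ t in (0:ℝ)..T,
        (Real.sqrt (2 * η) * ν t - Real.sqrt φ * ∫ s in (0 : ℝ)..t, ν s) ^ 2)
      = ∫ t in Set.Ioc (0:ℝ) T, (Real.sqrt (2*η) * ν t - Real.sqrt φ * G t) ^ 2 := by
    rw [intervalIntegral.integral_of_le hT.le]
    refine setIntegral_congr_fun measurableSet_Ioc (fun t ht => ?_)
    rw [intervalIntegral.integral_of_le ht.1.le]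
  have c2 : (∫ t in (0:ℝ)..T, (∫ s in (0 : ℝ)..t, ν s) * ν t)
      = ∫ t in Set.Ioc (0:ℝ) T, G t * ν t := by
    rw [intervalIntegral.integral_of_le hT.le]
    refine setIntegral_congr_fun measurableSet_Ioc (fun t ht => ?_)
    rw [intervalIntegral.integral_of_le ht.1.le]
  have c3 : (∫ t in (0:ℝ)..T, (∫ s in (0 : ℝ)..t, ν s) ^ 2)
      = ∫ t in Set.Ioc (0:ℝ) T, G t ^ 2 := by
    rw [intervalIntegral.integral_of_le hT.le]
    refine setIntegral_congr_fun measurableSet_Ioc (fun t ht => ?_)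
    rw [intervalIntegral.integral_of_le ht.1.le]
  have c4 : (∫ t in (0:ℝ)..T, (∫ s in (0 : ℝ)..t, ν s)
        * (c * ∫ s in (0 : ℝ)..t, Real.exp (β * (s - t)) * ν s))
      = ∫ t in Set.Ioc (0:ℝ) T, G t * (c * J t) := by
    rw [intervalIntegral.integral_of_le hT.le]
    refine setIntegral_congr_fun measurableSet_Ioc (fun t ht => ?_)
    rw [intervalIntegral.integral_of_le ht.1.le, intervalIntegral.integral_of_le ht.1.le]
  have c5 : (∫ t in (0:ℝ)..T, (ν t)^2) = ∫ t in Set.Ioc (0:ℝ) T, (ν t)^2 :=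
    intervalIntegral.integral_of_le hT.le
  rw [c1]
  rw [c2]
  rw [c3]
  rw [c4]
  rw [c5]
  rw [hexpand]
  rw [hGν]
  rw [hGJ]
  -- final inequality
  have hcs : c ≤ Real.sqrt (2*η*φ) := by
    have := Real.sqrt_le_sqrt hc.le
    rwa [Real.sqrt_sq hc0] at this
  have hSν : (0:ℝ) ≤ (∫ s in Set.Ioc (0:ℝ) T, ν s) ^ 2 / 2 := div_nonneg (sq_nonneg _) (by norm_num)
  have hSJ : (0:ℝ) ≤ (∫ s in Set.Ioc (0:ℝ) T, J s) ^ 2 / 2 := div_nonneg (sq_nonneg _) (by norm_num)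
  have hJ2 : (0:ℝ) ≤ ∫ t in Set.Ioc (0:ℝ) T, J t * J t :=
    setIntegral_nonneg measurableSet_Ioc (fun t _ => mul_self_nonneg _)
  nlinarith [mul_nonneg (sub_nonneg.2 hcs) hSν, mul_nonneg hc0 hJ2,
    mul_nonneg (mul_nonneg hβ.le hc0) hSJ, mul_nonneg (mul_nonneg hβ.le (mul_nonneg hβ.le hc0)) hSJ,
    mul_nonneg hβ.le (mul_nonneg hc0 hJ2)]
end

section
/- Let F_t = F₀ exp(−σ²t/2 + σW_t) be a geometric Brownian motion with zero drift, F₀>0, σ>0. Then for any κ>0, E[2κ(F_T^{1/2} − F₀^{1/2})] = 2κ F₀^{1/2}(e^{−σ²T/8} − 1), which is strictly negative; i.e. the expected change in value of a constant product market liquidity position is always a loss. -/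
open MeasureTheory ProbabilityTheory
open scoped NNReal ENNReal

lemma gauss_pdf_mul_exp (c : ℝ) {v : ℝ≥0} (hv : v ≠ 0) (x : ℝ) :
    gaussianPDFReal 0 v x * Real.exp (c * x)
      = Real.exp (c ^ 2 * v / 2) * gaussianPDFReal (c * v) v x := by
  have hv' : (v : ℝ) ≠ 0 := by exact_mod_cast hv
  simp only [gaussianPDFReal, sub_zero]
  rw [mul_assoc, ← Real.exp_add]
  rw [show Real.exp (c ^ 2 * v / 2) * ((Real.sqrt (2 * Real.pi * v))⁻¹ *
        Real.exp (-(x - c * v) ^ 2 / (2 * v)))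
      = (Real.sqrt (2 * Real.pi * v))⁻¹ *
        (Real.exp (c ^ 2 * v / 2) * Real.exp (-(x - c * v) ^ 2 / (2 * v))) from by ring,
    ← Real.exp_add]
  congr 1
  field_simp
  ring

lemma integrable_pdf_mul_exp (c : ℝ) {v : ℝ≥0} (hv : v ≠ 0) :
    Integrable (fun x => gaussianPDFReal 0 v x * Real.exp (c * x)) := by
  have h : (fun x => gaussianPDFReal 0 v x * Real.exp (c * x))
      = fun x => Real.exp (c ^ 2 * v / 2) * gaussianPDFReal (c * v) v x := by
    funext x; exact gauss_pdf_mul_exp c hv x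
  rw [h]
  exact (integrable_gaussianPDFReal _ _).const_mul _

lemma gaussianReal_eq_withDensity (μ : ℝ) {v : ℝ≥0} (hv : v ≠ 0) :
    gaussianReal μ v
      = MeasureTheory.volume.withDensity
          (fun x => ((gaussianPDFReal μ v x).toNNReal : ℝ≥0∞)) :=
  gaussianReal_of_var_ne_zero μ hv

lemma meas_pdf_toNNReal (μ : ℝ) (v : ℝ≥0) :
    Measurable (fun x => (gaussianPDFReal μ v x).toNNReal) :=
  (measurable_gaussianPDFReal μ v).real_toNNReal

lemma integrable_exp_gauss (c : ℝ) {v : ℝ≥0} (hv : v ≠ 0) :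
    Integrable (fun x => Real.exp (c * x)) (gaussianReal 0 v) := by
  rw [gaussianReal_eq_withDensity 0 hv,
    integrable_withDensity_iff_integrable_smul (meas_pdf_toNNReal 0 v)]
  have h : (fun x => (gaussianPDFReal 0 v x).toNNReal • Real.exp (c * x))
      = fun x => gaussianPDFReal 0 v x * Real.exp (c * x) := by
    funext x
    rw [NNReal.smul_def, smul_eq_mul, Real.coe_toNNReal _ (gaussianPDFReal_nonneg _ _ _)]
  rw [h]
  exact integrable_pdf_mul_exp c hv

lemma integral_exp_gauss (c : ℝ) {v : ℝ≥0} (hv : v ≠ 0) :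
    ∫ x, Real.exp (c * x) ∂(gaussianReal 0 v) = Real.exp (c ^ 2 * v / 2) := by
  rw [gaussianReal_eq_withDensity 0 hv,
    integral_withDensity_eq_integral_smul (meas_pdf_toNNReal 0 v)]
  have h : (fun x => (gaussianPDFReal 0 v x).toNNReal • Real.exp (c * x))
      = fun x => Real.exp (c ^ 2 * v / 2) * gaussianPDFReal (c * v) v x := by
    funext x
    rw [NNReal.smul_def, smul_eq_mul, Real.coe_toNNReal _ (gaussianPDFReal_nonneg _ _ _)]
    exact gauss_pdf_mul_exp c hv x
  rw [h, integral_const_mul, integral_gaussianPDFReal_eq_one _ hv, mul_one]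

/-- If `F_t = F₀exp(−σ²t/2 + σW_t)` is a driftless geometric
Brownian motion (so `W_T ~ N(0,T)`), then for any `κ > 0`,
`E[2κ(F_T^{1/2} − F₀^{1/2})] = 2κF₀^{1/2}(e^{−σ²T/8} − 1) < 0`: the expected
change in value of a constant product market liquidity position is a loss. -/
theorem stmt_13 {Ω : Type*} [MeasurableSpace Ω] (μpr : Measure Ω)
    [IsProbabilityMeasure μpr]
    (W : ℝ → Ω → ℝ) (T σ F₀ κ : ℝ)
    (hT : 0 < T) (hσ : 0 < σ) (hF₀ : 0 < F₀) (hκ : 0 < κ)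
    (hWT : Measure.map (W T) μpr = gaussianReal 0 (Real.toNNReal T))
    (hWmeas : Measurable (W T))
    (F : ℝ → Ω → ℝ)
    (hF : ∀ t : ℝ, ∀ ω : Ω,
      F t ω = F₀ * Real.exp (-σ ^ 2 * t / 2 + σ * W t ω)) :
    (∫ ω, 2 * κ * (Real.sqrt (F T ω) - Real.sqrt F₀) ∂μpr)
      = 2 * κ * Real.sqrt F₀ * (Real.exp (-σ ^ 2 * T / 8) - 1) ∧
    (∫ ω, 2 * κ * (Real.sqrt (F T ω) - Real.sqrt F₀) ∂μpr) < 0 := by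
  have hvne : (Real.toNNReal T) ≠ 0 := by
    simp [Real.toNNReal_eq_zero, not_le, hT]
  have hTv : ((Real.toNNReal T : ℝ≥0) : ℝ) = T := Real.coe_toNNReal T hT.le
  set c : ℝ := σ / 2 with hc
  -- integrability of exp(c * W T)
  have hint : Integrable (fun ω => Real.exp (c * W T ω)) μpr := by
    have h1 : Integrable (fun x => Real.exp (c * x)) (Measure.map (W T) μpr) := by
      rw [hWT]; exact integrable_exp_gauss c hvne
    exact (integrable_map_measure
      (Continuous.aestronglyMeasurable (by continuity))
      hWmeas.aemeasurable).mp h1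
  -- value of the integral of exp(c * W T)
  have hkey : ∫ ω, Real.exp (c * W T ω) ∂μpr = Real.exp (σ ^ 2 * T / 8) := by
    have h2 := integral_map (φ := W T) (μ := μpr) hWmeas.aemeasurable
      (f := fun x => Real.exp (c * x))
      (Continuous.aestronglyMeasurable (by continuity))
    rw [hWT, integral_exp_gauss c hvne, hTv] at h2
    rw [← h2]
    congr 1
    rw [hc]; ring
  -- rewrite the integrand
  set A : ℝ := 2 * κ * Real.sqrt F₀ * Real.exp (-σ ^ 2 * T / 4) with hA
  set B : ℝ := 2 * κ * Real.sqrt F₀ with hB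
  have hrw : (fun ω => 2 * κ * (Real.sqrt (F T ω) - Real.sqrt F₀))
      = fun ω => A * Real.exp (c * W T ω) - B := by
    funext ω
    rw [hF T ω]
    have hs : Real.sqrt (F₀ * Real.exp (-σ ^ 2 * T / 2 + σ * W T ω))
        = Real.sqrt F₀ * (Real.exp (-σ ^ 2 * T / 4) * Real.exp (c * W T ω)) := by
      rw [Real.sqrt_mul hF₀.le, ← Real.exp_half, ← Real.exp_add]
      congr 2
      rw [hc]; ring
    rw [hs, hA, hB]; ring
  rw [hrw]
  have hI : ∫ ω, (A * Real.exp (c * W T ω) - B) ∂μpr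
      = A * Real.exp (σ ^ 2 * T / 8) - B := by
    rw [integral_sub (hint.const_mul A) (integrable_const B),
      integral_const_mul, hkey, integral_const]
    simp
  have hAE : A * Real.exp (σ ^ 2 * T / 8) = B * Real.exp (-σ ^ 2 * T / 8) := by
    rw [hA, hB, mul_assoc, ← Real.exp_add]
    congr 2
    ring
  constructor
  · rw [hI, hAE, hB]; ring
  · rw [hI, hAE]
    have hB0 : 0 < B := by
      rw [hB]; positivity
    have he : Real.exp (-σ ^ 2 * T / 8) < 1 := by
      apply Real.exp_lt_one_iff.mpr
      have h3 : 0 < σ ^ 2 * T := by positivity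
      linarith
    nlinarith
end
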